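/- (Equivalence of Moore exponent set and MRD/scatteredness for monomial codes, one direction) Let I = {i₀,…,i_{k-1}} ⊆ {0,…,n-1} with k ≤ n. Then I is a Moore exponent set for q and n if and only if U = {(x^{q^{i₀}}, x^{q^{i₁}}, …, x^{q^{i_{k-1}}}) : x ∈ 𝔽_{q^n}} is an 𝔽_q-subspace of 𝔽_{q^n}^k such that dim_{𝔽_q}(U ∩ H) ≤ k-1 for every 𝔽_{q^n}-hyperplane H of 𝔽_{q^n}^k (i.e., U defines a linear set scattered with respect to hyperplanes). -/

import Mathlib

/-!
Since `x ↦ x^{q^m}` is a power of the Frobenius of `𝔽_{q^n}/𝔽_q`, the `q`-polynomial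
`L_a = ∑ a_c x^{q^{i_c}}` is `𝔽_q`-linear. The Moore matrix `(α_r^{q^{i_c}})` sends `a` to
`(L_a(α_r))_r`, so it is singular iff all `α_r` lie in the kernel of some `L_a` with `a ≠ 0`;
linearly dependent `α_r` always give a singular matrix. Hence the Moore property says exactly
that no such kernel contains `k` independent elements, i.e. has `𝔽_q`-dimension `≥ k`.
-/

open Module LinearMap

theorem Submodule.exists_linearIndependent_forall_mem_iff {F V ι : Type*} [Field F]
    [AddCommGroup V] [Module F V] [Fintype ι] (W : Submodule F V) [FiniteDimensional F W] :
    (∃ A : ι → V, LinearIndependent F A ∧ ∀ r, A r ∈ W) ↔ Fintype.card ι ≤ finrank F W := by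
  constructor
  · rintro ⟨A, hA, hAW⟩
    have hA' : LinearIndependent F fun r => (⟨A r, hAW r⟩ : W) :=
      LinearIndependent.of_comp W.subtype hA
    exact hA'.fintype_card_le_finrank
  · intro hcard
    obtain ⟨B, hB⟩ := exists_linearIndependent_of_le_finrank hcard
    refine ⟨fun r => B (Fintype.equivFin ι r), ?_, fun r => (B _).2⟩
    exact (hB.comp _ (Fintype.equivFin ι).injective).map' W.subtype W.ker_subtype

section MooreMatrix

variable {F K ι : Type*} [Field F] [Field K] [Algebra F K] [Fintype ι] [DecidableEq ι]

theorem det_linearMap_apply_eq_zero_of_not_linearIndependent (φ : ι → K →ₗ[F] K) {A : ι → K}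
    (hA : ¬ LinearIndependent F A) : (Matrix.of fun r c => φ c (A r)).det = 0 := by
  obtain ⟨g, hg, r₀, hr₀⟩ := Fintype.not_linearIndependent_iff.mp hA
  rw [← Matrix.exists_vecMul_eq_zero_iff]
  refine ⟨fun r => algebraMap F K (g r), fun h => hr₀ ?_, ?_⟩
  · simpa using congrFun h r₀
  · ext c
    simp only [Matrix.vecMul, dotProduct, Matrix.of_apply, Pi.zero_apply, ← Algebra.smul_def,
      ← map_smul, ← map_sum, hg, map_zero]

theorem det_linearMap_apply_eq_zero_iff (φ : ι → K →ₗ[F] K) (A : ι → K) :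
    (Matrix.of fun r c => φ c (A r)).det = 0 ↔
      ∃ a : ι → K, a ≠ 0 ∧ ∀ r, A r ∈ ker (∑ c, a c • φ c) := by
  rw [← Matrix.exists_mulVec_eq_zero_iff]
  simp only [funext_iff, Matrix.mulVec, dotProduct, Matrix.of_apply, Pi.zero_apply, mem_ker,
    LinearMap.sum_apply, LinearMap.smul_apply, smul_eq_mul, mul_comm]

theorem forall_det_linearMap_apply_eq_zero_iff [FiniteDimensional F K] (φ : ι → K →ₗ[F] K) :
    (∀ A : ι → K, (Matrix.of fun r c => φ c (A r)).det = 0 ↔ ¬ LinearIndependent F A) ↔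
      ∀ a : ι → K, a ≠ 0 → finrank F (ker (∑ c, a c • φ c)) < Fintype.card ι := by
  simp only [det_linearMap_apply_eq_zero_iff]
  constructor
  · intro hMoore a ha
    by_contra! hle
    obtain ⟨A, hA, hAker⟩ := (Submodule.exists_linearIndependent_forall_mem_iff _).mpr hle
    exact (hMoore A).mp ⟨a, ha, hAker⟩ hA
  · intro hker A
    refine ⟨fun ⟨a, ha, hAker⟩ hA => ?_, fun hA => ?_⟩
    · exact (hker a ha).not_ge
        ((Submodule.exists_linearIndependent_forall_mem_iff _).mp ⟨A, hA, hAker⟩)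
    · exact (det_linearMap_apply_eq_zero_iff φ A).mp
        (det_linearMap_apply_eq_zero_of_not_linearIndependent φ hA)

end MooreMatrix

theorem FiniteField.frobeniusAlgHom_pow_apply (F R : Type*) [Field F] [Fintype F] [CommRing R]
    [Algebra F R] (m : ℕ) (x : R) :
    (frobeniusAlgHom F R ^ m) x = x ^ Fintype.card F ^ m := by
  rw [AlgHom.coe_pow, coe_frobeniusAlgHom, pow_iterate]

theorem stmt_15_general (q k : ℕ)
    (Fq K : Type*) [Field Fq] [Field K] [Algebra Fq K]
    [Fintype Fq] [Fintype K]
    (hcard_q : Fintype.card Fq = q)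
    (i : Fin k → ℕ) :
    (∀ A : Fin k → K,
        (Matrix.of fun r c => A r ^ q ^ i c : Matrix (Fin k) (Fin k) K).det = 0 ↔
          ¬ LinearIndependent Fq A) ↔
      (∀ a : Fin k → K, a ≠ 0 →
        Nat.card {x : K | ∑ j, a j * x ^ q ^ i j = 0} ≤ q ^ (k - 1)) := by
  subst hcard_q
  let φ : Fin k → K →ₗ[Fq] K := fun c => (FiniteField.frobeniusAlgHom Fq K ^ i c).toLinearMap
  have hφ : ∀ c x, φ c x = x ^ Fintype.card Fq ^ i c := fun c x =>
    FiniteField.frobeniusAlgHom_pow_apply Fq K (i c) x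
  have hker : ∀ a : Fin k → K, {x : K | ∑ j, a j * x ^ Fintype.card Fq ^ i j = 0} =
      ker (∑ c, a c • φ c) := fun a => by
    ext x
    simp [hφ]
  have hMoore := forall_det_linearMap_apply_eq_zero_iff (F := Fq) φ
  simp only [hφ] at hMoore
  rw [hMoore]
  refine forall₂_congr fun a ha => ?_
  rw [hker, SetLike.coe_sort_coe, natCard_eq_pow_finrank (K := Fq), Nat.card_eq_fintype_card,
    pow_le_pow_iff_right₀ Fintype.one_lt_card, Fintype.card_fin]
  have hk : 0 < k := (Function.ne_iff.mp ha).choose.pos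
  omega

/-- `I = {i₀, …, i_{k-1}} ⊆ {0, …, n-1}` is a Moore exponent set for `q` and `n` iff the
subspace `U = {(x^{q^{i₀}}, …, x^{q^{i_{k-1}}}) : x ∈ 𝔽_{q^n}}` meets every
`𝔽_{q^n}`-hyperplane of `𝔽_{q^n}^k` in an `𝔽_q`-subspace of dimension at most `k - 1`,
i.e. every nonzero `q`-polynomial `∑ a_j x^{q^{i_j}}` has kernel of `𝔽_q`-dimension at
most `k - 1` (cardinality at most `q^(k-1)`). -/
theorem stmt_15 (q n k : ℕ) (hq : IsPrimePow q) (hk : 1 ≤ k) (hkn : k ≤ n)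
    (Fq K : Type*) [Field Fq] [Field K] [Algebra Fq K]
    [Fintype Fq] [Fintype K]
    (hcard_q : Fintype.card Fq = q) (hcard_K : Fintype.card K = q ^ n)
    (i : Fin k → ℕ) (hilt : ∀ c, i c < n) (hiinj : Function.Injective i) :
    (∀ A : Fin k → K,
        (Matrix.of fun r c => A r ^ q ^ i c : Matrix (Fin k) (Fin k) K).det = 0 ↔
          ¬ LinearIndependent Fq A) ↔
      (∀ a : Fin k → K, a ≠ 0 →
        Nat.card {x : K | ∑ j, a j * x ^ q ^ i j = 0} ≤ q ^ (k - 1)) :=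
  stmt_15_general q k Fq K hcard_q i
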